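/- arXiv:0807.2277 — 2 statements merged into one kernel-verified Lean document; each statement's English description precedes it below -/
import Mathlib

section
/- Let μ₁ be the measure on ℝ with density the indicator of [0,1] with respect to Lebesgue measure, and let μ₂ be the measure on ℝ with density 2·(indicator of [0,1/4] ∪ [3/4,1]) with respect to Lebesgue measure. Then μ₁([0,1/2]) = 1/2 and μ₂([1/2,1]) = 1/2, while μ₁([1/4,1]) = 3/4 and μ₂([0,1/4]) = 1/2. Hence the single-cut allocation at x = 1/2 (left piece to player 1, right piece to player 2) is Pareto dominated by allocating [0,1/4] to player 2 and [1/4,1] to player 1, which is strictly better for player 1 and at least as good for player 2. -/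
open MeasureTheory Set

/-- Player 1 values the unit interval uniformly. -/
noncomputable def mu1 : Measure ℝ :=
  volume.withDensity ((Icc (0:ℝ) 1).indicator fun _ => (1 : ENNReal))

/-- Player 2 values only the leftmost and rightmost quarters, equally and uniformly. -/
noncomputable def mu2 : Measure ℝ :=
  volume.withDensity ((Icc (0:ℝ) (1/4) ∪ Icc (3/4:ℝ) 1).indicator fun _ => (2 : ENNReal))

lemma mu1_apply (s : Set ℝ) (hs : MeasurableSet s) :
    mu1 s = volume (s ∩ Icc (0:ℝ) 1) := by
  rw [mu1, withDensity_indicator measurableSet_Icc, withDensity_const, one_smul,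
    Measure.restrict_apply hs]

lemma mu2_apply (s : Set ℝ) (hs : MeasurableSet s) :
    mu2 s = 2 * volume (s ∩ (Icc (0:ℝ) (1/4) ∪ Icc (3/4:ℝ) 1)) := by
  rw [mu2, withDensity_indicator (measurableSet_Icc.union measurableSet_Icc),
    withDensity_const, Measure.smul_apply, Measure.restrict_apply hs, smul_eq_mul]

/-- The single-cut allocation at `x = 1/2` gives each player value `1/2`, while giving
`[0,1/4]` to player 2 and `[1/4,1]` to player 1 gives player 1 value `3/4` and player 2
value `1/2`: the cut at `1/2` is Pareto dominated. -/
theorem single_cut_not_pareto_optimal :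
    mu1 (Icc (0:ℝ) (1/2)) = 1/2 ∧
    mu2 (Icc (1/2:ℝ) 1) = 1/2 ∧
    mu1 (Icc (1/4:ℝ) 1) = 3/4 ∧
    mu2 (Icc (0:ℝ) (1/4)) = 1/2 := by
  have h1 : Icc (0:ℝ) (1/2) ∩ Icc 0 1 = Icc 0 (1/2) := by
    rw [Icc_inter_Icc]; norm_num
  have h2 : Icc (1/2:ℝ) 1 ∩ (Icc 0 (1/4) ∪ Icc (3/4) 1) = Icc (3/4) 1 := by
    rw [inter_union_distrib_left, Icc_inter_Icc, Icc_inter_Icc]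
    norm_num
  have h3 : Icc (1/4:ℝ) 1 ∩ Icc 0 1 = Icc (1/4) 1 := by
    rw [Icc_inter_Icc]; norm_num
  have h4 : Icc (0:ℝ) (1/4) ∩ (Icc 0 (1/4) ∪ Icc (3/4) 1) = Icc 0 (1/4) := by
    rw [inter_union_distrib_left, Icc_inter_Icc, Icc_inter_Icc]
    norm_num
  have key : (2:ENNReal) * 4⁻¹ = 2⁻¹ := by
    rw [show (4:ENNReal) = 2*2 by norm_num, ENNReal.mul_inv (by norm_num) (by norm_num),
      ← mul_assoc, ENNReal.mul_inv_cancel (by norm_num) (by norm_num), one_mul]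
  refine ⟨?_, ?_, ?_, ?_⟩
  · rw [mu1_apply _ measurableSet_Icc, h1, Real.volume_Icc]
    norm_num
    rw [ENNReal.ofReal_div_of_pos (by norm_num)]; norm_num
  · rw [mu2_apply _ measurableSet_Icc, h2, Real.volume_Icc]
    norm_num
    rw [ENNReal.ofReal_div_of_pos (by norm_num)]; norm_num
    exact key
  · rw [mu1_apply _ measurableSet_Icc, h3, Real.volume_Icc]
    norm_num
    rw [ENNReal.ofReal_div_of_pos (by norm_num)]; norm_num
  · rw [mu2_apply _ measurableSet_Icc, h4, Real.volume_Icc]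
    norm_num
    rw [ENNReal.ofReal_div_of_pos (by norm_num)]; norm_num
    exact key
end

section
/- Let μ₁ be the measure on ℝ with density the indicator of [0,1] with respect to Lebesgue measure, and let μ₂ be the measure on ℝ with density 2·(indicator of [0,1/4] ∪ [3/4,1]) with respect to Lebesgue measure. Then μ₂ is absolutely continuous with respect to Lebesgue measure, yet μ₁((1/4, 3/4)) = 1/2 > 0 while μ₂((1/4, 3/4)) = 0. -/
open MeasureTheory Set

/-- `mu2` is absolutely continuous with respect to Lebesgue measure, yet the set
`(1/4, 3/4)` has `mu1`-measure `1/2 > 0` and `mu2`-measure `0`. -/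
theorem abs_continuity_does_not_imply_mutual :
    mu2 ≪ volume ∧
    mu1 (Ioo (1/4 : ℝ) (3/4)) = 1/2 ∧
    0 < mu1 (Ioo (1/4 : ℝ) (3/4)) ∧
    mu2 (Ioo (1/4 : ℝ) (3/4)) = 0 := by
  have hmeas : MeasurableSet (Ioo (1/4 : ℝ) (3/4)) := measurableSet_Ioo
  have h1 : mu1 (Ioo (1/4 : ℝ) (3/4)) = 1/2 := by
    rw [mu1, withDensity_indicator measurableSet_Icc, withDensity_const, one_smul,
      Measure.restrict_apply hmeas]
    have : Ioo (1/4 : ℝ) (3/4) ∩ Icc 0 1 = Ioo (1/4 : ℝ) (3/4) := by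
      apply inter_eq_self_of_subset_left
      intro x hx
      exact ⟨by linarith [hx.1], by linarith [hx.2]⟩
    rw [this, Real.volume_Ioo]
    norm_num
    rw [ENNReal.ofReal_div_of_pos (by norm_num)]
    norm_num
  refine ⟨withDensity_absolutelyContinuous _ _, h1, by rw [h1]; norm_num, ?_⟩
  rw [mu2, withDensity_indicator (measurableSet_Icc.union measurableSet_Icc),
    withDensity_const, Measure.smul_apply, Measure.restrict_apply hmeas]
  have : Ioo (1/4 : ℝ) (3/4) ∩ (Icc (0:ℝ) (1/4) ∪ Icc (3/4:ℝ) 1) = ∅ := by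
    ext x
    simp only [mem_inter_iff, mem_Ioo, mem_union, mem_Icc, mem_empty_iff_false, iff_false]
    rintro ⟨⟨h1, h2⟩, h3 | h3⟩ <;> linarith [h3.1, h3.2]
  rw [this]
  simp
end
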